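/- Let q₀ > 0 and let f : (−∞, 0) → ℝ be measurable with f(q₀²/s) = f(s) for all s < 0. Let z ∈ ℂ ∖ (−∞, 0] and assume ∫_{−∞}^0 |f(s)|·|1/(s−z) − 1/(2s)| ds < ∞ and ∫_{−∞}^0 |f(s)|·|1/(s − q₀²/z) − 1/(2s)| ds < ∞. Then ∫_{−∞}^0 f(s)·(1/(s − q₀²/z) − 1/(2s)) ds = −∫_{−∞}^0 f(s)·(1/(s − z) − 1/(2s)) ds. Consequently, the function δ(z) = exp( (1/(2πi)) ∫_{−∞}^0 f(s)·(1/(s−z) − 1/(2s)) ds ) satisfies the symmetry δ(q₀²/z) = 1/δ(z); moreover, since f is real-valued, conj(δ(conj z)) = 1/δ(z). -/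

import Mathlib

/-!
The substitution `s = q₀²/t` maps `(−∞, 0)` onto itself with `|ds| = (q₀²/t²) dt`, and `f` is
invariant under it. The kernel `K_w(s) = 1/(s − w) − 1/(2s)` transforms as
`(q₀²/t²) · K_{q₀²/z}(q₀²/t) = −K_z(t)`, so the integral defining `log δ` is odd under
`z ↦ q₀²/z`. For the conjugation symmetry, `f` is real and `conj (1/(2πi)) = −1/(2πi)`.
-/

open MeasureTheory Complex

/-- `δ(w) = exp((1/(2πi)) ∫_{−∞}^0 f(s)·(1/(s−w) − 1/(2s)) ds)`. -/
noncomputable def deltaFun (f : ℝ → ℝ) (w : ℂ) : ℂ :=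
  Complex.exp ((1 / (2 * (Real.pi : ℂ) * Complex.I)) *
    ∫ s in Set.Iio (0 : ℝ), (f s : ℂ) * (1 / ((s : ℂ) - w) - 1 / (2 * (s : ℂ))))

open Set ComplexConjugate

theorem image_div_Iio_zero {c : ℝ} (hc : 0 < c) : (fun t : ℝ => c / t) '' Iio 0 = Iio 0 := by
  refine Subset.antisymm (image_subset_iff.2 fun t ht => div_neg_of_pos_of_neg hc ht)
    fun s hs => ⟨c / s, div_neg_of_pos_of_neg hc hs, div_div_cancel₀ hc.ne'⟩

theorem integral_Iio_comp_div {E : Type*} [NormedAddCommGroup E] [NormedSpace ℝ E]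
    {c : ℝ} (hc : 0 < c) (g : ℝ → E) :
    ∫ t in Iio 0, (c / t ^ 2) • g (c / t) = ∫ s in Iio 0, g s := by
  have hderiv : ∀ t ∈ Iio (0 : ℝ),
      HasDerivWithinAt (fun t => c / t) (c * -(t ^ 2)⁻¹) (Iio 0) t := fun t ht =>
    ((hasDerivAt_inv ht.ne).const_mul c).hasDerivWithinAt
  have hinj : InjOn (fun t : ℝ => c / t) (Iio 0) := fun a _ b _ h =>
    inv_injective (mul_left_cancel₀ hc.ne' h)
  have := integral_image_eq_integral_abs_deriv_smul measurableSet_Iio hderiv hinj g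
  rw [image_div_Iio_zero hc] at this
  rw [this]
  congr 1 with t
  rw [abs_mul, abs_neg, abs_inv, abs_of_pos hc, abs_of_nonneg (sq_nonneg t), div_eq_mul_inv]

theorem div_sq_mul_kernel_div {c t z : ℂ} (hc : c ≠ 0) (ht : t ≠ 0) (hz : z ≠ 0) (htz : t ≠ z) :
    c / t ^ 2 * (1 / (c / t - c / z) - 1 / (2 * (c / t))) = -(1 / (t - z) - 1 / (2 * t)) := by
  have hzt : z - t ≠ 0 := sub_ne_zero.2 htz.symm
  have htz' : t - z ≠ 0 := sub_ne_zero.2 htz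
  field_simp
  ring

theorem integral_Iio_mul_kernel_div_eq_neg {c : ℝ} (hc : 0 < c) {f : ℝ → ℝ}
    (hsym : ∀ s < 0, f (c / s) = f s) {z : ℂ} (hz : z ∈ slitPlane) :
    ∫ s in Iio 0, (f s : ℂ) * (1 / ((s : ℂ) - c / z) - 1 / (2 * (s : ℂ))) =
      -∫ s in Iio 0, (f s : ℂ) * (1 / ((s : ℂ) - z) - 1 / (2 * (s : ℂ))) := by
  rw [← integral_Iio_comp_div hc, ← integral_neg]
  refine setIntegral_congr_fun measurableSet_Iio fun t ht => ?_
  have htz : (t : ℂ) ≠ z := by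
    rintro rfl
    exact ht.not_gt (ofReal_mem_slitPlane.1 hz)
  rw [hsym t ht, real_smul, mul_left_comm]
  push_cast
  rw [div_sq_mul_kernel_div (ofReal_ne_zero.2 hc.ne') (ofReal_ne_zero.2 ht.ne)
    (slitPlane_ne_zero hz) htz, mul_neg]

theorem deltaFun_eq_one_div_of_integral_eq_neg {f : ℝ → ℝ} {w z : ℂ}
    (h : ∫ s in Iio 0, (f s : ℂ) * (1 / ((s : ℂ) - w) - 1 / (2 * (s : ℂ))) =
      -∫ s in Iio 0, (f s : ℂ) * (1 / ((s : ℂ) - z) - 1 / (2 * (s : ℂ)))) :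
    deltaFun f w = 1 / deltaFun f z := by
  rw [deltaFun, deltaFun, h, mul_neg, Complex.exp_neg, ← one_div]

theorem conj_deltaFun_conj (f : ℝ → ℝ) (z : ℂ) :
    conj (deltaFun f (conj z)) = 1 / deltaFun f z := by
  have hI : conj (1 / (2 * (Real.pi : ℂ) * I)) = -(1 / (2 * (Real.pi : ℂ) * I)) := by
    simp [conj_ofReal, conj_I, map_ofNat]
  rw [deltaFun, deltaFun, ← Complex.exp_conj, map_mul, ← integral_conj, hI, one_div (exp _),
    ← Complex.exp_neg, neg_mul]
  simp [map_ofNat]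

theorem delta_symmetry_general (q₀ : ℝ) (hq₀ : 0 < q₀) (f : ℝ → ℝ)
    (hsym : ∀ s : ℝ, s < 0 → f (q₀ ^ 2 / s) = f s)
    (z : ℂ) (hz : z.im ≠ 0 ∨ 0 < z.re) :
    (∫ s in Set.Iio (0 : ℝ),
        (f s : ℂ) * (1 / ((s : ℂ) - (q₀ : ℂ) ^ 2 / z) - 1 / (2 * (s : ℂ)))) =
      -∫ s in Set.Iio (0 : ℝ),
        (f s : ℂ) * (1 / ((s : ℂ) - z) - 1 / (2 * (s : ℂ))) ∧
    deltaFun f ((q₀ : ℂ) ^ 2 / z) = 1 / deltaFun f z ∧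
    (starRingEnd ℂ) (deltaFun f ((starRingEnd ℂ) z)) = 1 / deltaFun f z := by
  have hodd := integral_Iio_mul_kernel_div_eq_neg (pow_pos hq₀ 2) hsym
    (mem_slitPlane_iff.2 hz.symm)
  push_cast at hodd
  exact ⟨hodd, deltaFun_eq_one_div_of_integral_eq_neg hodd, conj_deltaFun_conj f z⟩

/-- for `f` symmetric under `s ↦ q₀²/s` on `(−∞,0)`, the Cauchy-type
integral is odd under `z ↦ q₀²/z`, and hence `δ(q₀²/z) = 1/δ(z)`; moreover, since `f`
is real-valued, `conj(δ(conj z)) = 1/δ(z)`. -/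
theorem delta_symmetry (q₀ : ℝ) (hq₀ : 0 < q₀) (f : ℝ → ℝ) (hf : Measurable f)
    (hsym : ∀ s : ℝ, s < 0 → f (q₀ ^ 2 / s) = f s)
    (z : ℂ) (hz : z.im ≠ 0 ∨ 0 < z.re)
    (hint1 : IntegrableOn
      (fun s : ℝ => (f s : ℂ) * (1 / ((s : ℂ) - z) - 1 / (2 * (s : ℂ)))) (Set.Iio 0))
    (hint2 : IntegrableOn
      (fun s : ℝ => (f s : ℂ) * (1 / ((s : ℂ) - (q₀ : ℂ) ^ 2 / z) - 1 / (2 * (s : ℂ))))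
      (Set.Iio 0)) :
    (∫ s in Set.Iio (0 : ℝ),
        (f s : ℂ) * (1 / ((s : ℂ) - (q₀ : ℂ) ^ 2 / z) - 1 / (2 * (s : ℂ)))) =
      -∫ s in Set.Iio (0 : ℝ),
        (f s : ℂ) * (1 / ((s : ℂ) - z) - 1 / (2 * (s : ℂ))) ∧
    deltaFun f ((q₀ : ℂ) ^ 2 / z) = 1 / deltaFun f z ∧
    (starRingEnd ℂ) (deltaFun f ((starRingEnd ℂ) z)) = 1 / deltaFun f z :=
  delta_symmetry_general q₀ hq₀ f hsym z hz
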